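/- For every k ≥ 2, the largest adjacency eigenvalue of the binomial tree satisfies the recurrence λ₁(T_k) = (1/2)(λ₁(T_{k−1}) + √(λ₁(T_{k−1})² + 4)), with λ₁(T_1) = 0. -/

import Mathlib

open scoped Matrix in
/-- `lambda1 G` : the largest eigenvalue of the adjacency matrix of `G`. -/
noncomputable def lambda1 {V : Type} [Fintype V] (G : SimpleGraph V) : ℝ :=
  letI := Classical.decRel G.Adj
  sSup {x : ℝ | ∃ v : V → ℝ, v ≠ 0 ∧ G.adjMatrix ℝ *ᵥ v = x • v}

/-- The binomial tree `T_k` on `2^(k-1)` vertices: `T_1 = K_1`, and `T_{k+1}` is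
obtained from `T_k` by attaching one new pendant leaf to every vertex.  Concretely,
vertex `j ≠ 0` is joined to the vertex obtained by clearing the highest set bit
of `j`. -/
def binomialTree (k : ℕ) : SimpleGraph (Fin (2 ^ (k - 1))) :=
  SimpleGraph.fromRel fun i j =>
    (j : ℕ) ≠ 0 ∧ (i : ℕ) + 2 ^ Nat.log 2 (j : ℕ) = (j : ℕ)

/-!
Listing the vertices of `T_{k+1}` as the vertices of `T_k` followed by their new leaves, the
adjacency matrix of `T_{k+1}` becomes the block matrix `[[A, 1], [1, 0]]`, with `A` that of `T_k`.
An eigenvector `(a, b)` for `x` has `a = x • b` and `A b = (x - x⁻¹) • b`, so the eigenvalues of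
`T_{k+1}` are exactly the roots of `x ^ 2 = μ * x + 1` for the eigenvalues `μ` of `T_k`. The larger
root `(μ + √(μ ^ 2 + 4)) / 2` is increasing in `μ` and the smaller one is negative, so the largest
eigenvalue of `T_{k+1}` is the larger root for the largest `μ`.
-/

open Matrix

namespace Matrix

variable {n : Type*} [Fintype n] [DecidableEq n]

theorem spectrum_submatrix_equiv {R : Type*} [CommRing R] {m : Type*} [Fintype m] [DecidableEq m]
    (A : Matrix m m R) (e : n ≃ m) : spectrum R (A.submatrix e e) = spectrum R A :=
  AlgEquiv.spectrum_eq (reindexAlgEquiv R R e.symm) A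

variable {K : Type*} [Field K]

theorem mem_spectrum_iff_exists_mulVec_eq_smul {A : Matrix n n K} {x : K} :
    x ∈ spectrum K A ↔ ∃ v : n → K, v ≠ 0 ∧ A *ᵥ v = x • v := by
  rw [← spectrum_toLin', ← Module.End.hasEigenvalue_iff_mem_spectrum]
  constructor
  · intro h
    obtain ⟨v, hv⟩ := h.exists_hasEigenvector
    exact ⟨v, hv.2, by simpa using hv.apply_eq_smul⟩
  · rintro ⟨v, hv0, hv⟩
    exact Module.End.hasEigenvalue_of_hasEigenvector
      ⟨Module.End.mem_eigenspace_iff.2 (by simpa using hv), hv0⟩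

theorem spectrum_fromBlocks_one_one_zero (A : Matrix n n K) :
    spectrum K (fromBlocks A 1 1 (0 : Matrix n n K)) =
      {x | ∃ μ ∈ spectrum K A, x ^ 2 = μ * x + 1} := by
  ext x
  simp only [Set.mem_ofPred_eq, mem_spectrum_iff_exists_mulVec_eq_smul]
  constructor
  · rintro ⟨v, hv0, hv⟩
    obtain ⟨a, b, rfl⟩ : ∃ a b, v = Sum.elim a b := ⟨_, _, (Sum.elim_comp_inl_inr v).symm⟩
    rw [fromBlocks_mulVec] at hv
    simp only [Sum.elim_comp_inl, Sum.elim_comp_inr, one_mulVec, zero_mulVec, add_zero] at hv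
    have ha : A *ᵥ a + b = x • a := congr(($hv) ∘ Sum.inl)
    have hb : a = x • b := congr(($hv) ∘ Sum.inr)
    have hb0 : b ≠ 0 := by
      rintro rfl
      rw [smul_zero] at hb
      exact hv0 (by rw [hb, Sum.elim_zero_zero])
    have hx0 : x ≠ 0 := by
      rintro rfl
      rw [hb, zero_smul, mulVec_zero, zero_add, smul_zero] at ha
      exact hb0 ha
    refine ⟨x - x⁻¹, ⟨b, hb0, ?_⟩, by field_simp; ring⟩
    rw [hb, mulVec_smul] at ha
    have := congr(x⁻¹ • $ha)
    rw [smul_add, smul_smul, inv_mul_cancel₀ hx0, one_smul, smul_smul, inv_mul_cancel₀ hx0,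
      one_smul] at this
    rw [sub_smul, ← this, add_sub_cancel_right]
  · rintro ⟨μ, ⟨b, hb0, hb⟩, hx⟩
    refine ⟨Sum.elim (x • b) b, fun h => hb0 congr(($h) ∘ Sum.inr), ?_⟩
    rw [fromBlocks_mulVec]
    ext (i | i)
    · simp only [Sum.elim_comp_inl, Sum.elim_comp_inr, one_mulVec, Sum.elim_inl, Pi.add_apply,
        mulVec_smul, hb, Pi.smul_apply, smul_eq_mul]
      linear_combination -(b i) * hx
    · simp

end Matrix

theorem le_of_sq_eq_mul_add_one {μ ν x : ℝ} (hνμ : ν ≤ μ) (hx : x ^ 2 = ν * x + 1) :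
    x ≤ (μ + √(μ ^ 2 + 4)) / 2 := by
  have hμ : |μ| < √(μ ^ 2 + 4) := Real.lt_sqrt_of_sq_lt (by rw [sq_abs]; linarith)
  rcases le_or_gt x 0 with hx0 | hx0
  · linarith [neg_abs_le μ]
  · have : (2 * x - μ) ^ 2 ≤ μ ^ 2 + 4 := by nlinarith
    linarith [le_abs_self (2 * x - μ), Real.abs_le_sqrt this]

theorem isGreatest_setOf_sq_eq_mul_add_one {S : Set ℝ} {μ : ℝ} (h : IsGreatest S μ) :
    IsGreatest {x | ∃ ν ∈ S, x ^ 2 = ν * x + 1} ((μ + √(μ ^ 2 + 4)) / 2) := by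
  refine ⟨⟨μ, h.1, ?_⟩, ?_⟩
  · linear_combination Real.sq_sqrt (by positivity : (0 : ℝ) ≤ μ ^ 2 + 4) / 4
  · rintro x ⟨ν, hν, hx⟩
    exact le_of_sq_eq_mul_add_one (h.2 hν) hx

namespace SimpleGraph

variable {V : Type} [Fintype V] [DecidableEq V] (G : SimpleGraph V) [DecidableRel G.Adj]

theorem lambda1_eq_sSup_spectrum : lambda1 G = sSup (spectrum ℝ (G.adjMatrix ℝ)) := by
  unfold lambda1
  simp only [← mem_spectrum_iff_exists_mulVec_eq_smul, Set.ofPred_mem_eq]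
  congr!

theorem isGreatest_spectrum_lambda1 [Nonempty V] :
    IsGreatest (spectrum ℝ (G.adjMatrix ℝ)) (lambda1 G) := by
  have hfin := (G.adjMatrix ℝ).finite_spectrum
  rw [lambda1_eq_sSup_spectrum]
  refine ⟨Set.Nonempty.csSup_mem ?_ hfin, fun x hx => le_csSup hfin.bddAbove hx⟩
  exact ⟨_, (G.isHermitian_adjMatrix ℝ).eigenvalues_mem_spectrum_real (Classical.arbitrary V)⟩

end SimpleGraph

theorem binomialTree_adj {k : ℕ} {i j : Fin (2 ^ (k - 1))} :
    (binomialTree k).Adj i j ↔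
      ((j : ℕ) ≠ 0 ∧ (i : ℕ) + 2 ^ Nat.log 2 (j : ℕ) = j) ∨
        ((i : ℕ) ≠ 0 ∧ (j : ℕ) + 2 ^ Nat.log 2 (i : ℕ) = i) := by
  refine ⟨And.right, fun h => ⟨?_, h⟩⟩
  rintro rfl
  have := Nat.one_le_two_pow (n := Nat.log 2 (i : ℕ))
  omega

/-- Vertex `i` of `T_{m+1}` is `inl i`, and the leaf `2 ^ m + i` attached to it in `T_{m+2}` is
`inr i`. -/
def binomialTreeSplit (m : ℕ) : Fin (2 ^ m) ⊕ Fin (2 ^ m) ≃ Fin (2 ^ (m + 1)) :=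
  finSumFinEquiv.trans (finCongr (by ring))

@[simp] theorem binomialTreeSplit_inl (m : ℕ) (i : Fin (2 ^ m)) :
    (binomialTreeSplit m (.inl i) : ℕ) = i := by
  simp [binomialTreeSplit]

@[simp] theorem binomialTreeSplit_inr (m : ℕ) (i : Fin (2 ^ m)) :
    (binomialTreeSplit m (.inr i) : ℕ) = 2 ^ m + i := by
  simp [binomialTreeSplit, add_comm]

theorem log_two_pow_add (m : ℕ) (i : Fin (2 ^ m)) : Nat.log 2 (2 ^ m + i) = m := by
  refine Nat.log_eq_of_pow_le_of_lt_pow (by omega) ?_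
  rw [pow_succ]
  omega

theorem binomialTree_adj_split_inl_inl (m : ℕ) (i j : Fin (2 ^ m)) :
    (binomialTree (m + 2)).Adj (binomialTreeSplit m (.inl i)) (binomialTreeSplit m (.inl j)) ↔
      (binomialTree (m + 1)).Adj i j := by
  rw [binomialTree_adj, binomialTree_adj, binomialTreeSplit_inl, binomialTreeSplit_inl]

theorem binomialTree_adj_split_inl_inr (m : ℕ) (i j : Fin (2 ^ m)) :
    (binomialTree (m + 2)).Adj (binomialTreeSplit m (.inl i)) (binomialTreeSplit m (.inr j)) ↔
      i = j := by
  rw [binomialTree_adj, binomialTreeSplit_inl, binomialTreeSplit_inr, log_two_pow_add, Fin.ext_iff]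
  have := Nat.one_le_two_pow (n := Nat.log 2 (i : ℕ))
  omega

theorem binomialTree_not_adj_split_inr_inr (m : ℕ) (i j : Fin (2 ^ m)) :
    ¬ (binomialTree (m + 2)).Adj (binomialTreeSplit m (.inr i)) (binomialTreeSplit m (.inr j)) := by
  rw [binomialTree_adj, binomialTreeSplit_inr, binomialTreeSplit_inr, log_two_pow_add,
    log_two_pow_add]
  omega

theorem adjMatrix_binomialTree_submatrix_split (m : ℕ) [DecidableRel (binomialTree (m + 1)).Adj]
    [DecidableRel (binomialTree (m + 2)).Adj] :
    ((binomialTree (m + 2)).adjMatrix ℝ).submatrix (binomialTreeSplit m) (binomialTreeSplit m) =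
      fromBlocks (n := Fin (2 ^ m)) (l := Fin (2 ^ m))
        ((binomialTree (m + 1)).adjMatrix ℝ) 1 1 0 := by
  ext (i | i) (j | j)
  · simp [binomialTree_adj_split_inl_inl]
  · simp [binomialTree_adj_split_inl_inr, one_apply]
  · simp [(binomialTree _).adj_comm, binomialTree_adj_split_inl_inr, one_apply, eq_comm]
  · simp [binomialTree_not_adj_split_inr_inr]

theorem adjMatrix_binomialTree_one [DecidableRel (binomialTree 1).Adj] :
    (binomialTree 1).adjMatrix ℝ = 0 := by
  ext i j
  rw [Subsingleton.elim (α := Fin 1) i j]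
  simp

/-- `λ₁(T_1) = 0` and, for every `k ≥ 2`, the largest adjacency eigenvalue of the
binomial tree satisfies `λ₁(T_k) = (λ₁(T_{k-1}) + √(λ₁(T_{k-1})² + 4)) / 2`. -/
theorem lambda1_binomialTree_recurrence :
    lambda1 (binomialTree 1) = 0 ∧
    ∀ k : ℕ, 2 ≤ k →
      lambda1 (binomialTree k) =
        (lambda1 (binomialTree (k - 1)) +
          Real.sqrt (lambda1 (binomialTree (k - 1)) ^ 2 + 4)) / 2 := by
  classical
  refine ⟨?_, fun k hk => ?_⟩
  · rw [SimpleGraph.lambda1_eq_sSup_spectrum, adjMatrix_binomialTree_one, spectrum.zero_eq,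
      csSup_singleton]
  · obtain ⟨m, rfl⟩ : ∃ m, k = m + 2 := ⟨k - 2, by omega⟩
    have h := isGreatest_setOf_sq_eq_mul_add_one
      ((binomialTree (m + 1)).isGreatest_spectrum_lambda1)
    rw [← spectrum_fromBlocks_one_one_zero, ← adjMatrix_binomialTree_submatrix_split,
      spectrum_submatrix_equiv] at h
    exact ((binomialTree (m + 2)).isGreatest_spectrum_lambda1).unique h
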